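/- arXiv:1406.4547 — 5 statements merged into one kernel-verified Lean document; each statement's English description precedes it below -/
import Mathlib

section
/- Let k ≥ 1 and let F₁, F₂ be invertible 𝔽₂-linear maps of 𝔽₂^k, with adjoints F₁*, F₂* (the linear maps whose matrices are the transposes), and set G₁ = (F₁*)⁻¹, G₂ = (F₂*)⁻¹. Then the orthogonal complement of the linear code C(F₁,F₂) = {(x+y, F₁(x), F₂(y)) : x, y ∈ 𝔽₂^k} ⊆ 𝔽₂^{3k} with respect to the standard bilinear form equals the [3k,k] linear code {(u, G₁(u), G₂(u)) : u ∈ 𝔽₂^k}. Moreover, (F₁, F₂) form a Correlation Immune Pair of strength d if and only if every nonzero codeword of {(u, G₁(u), G₂(u)) : u ∈ 𝔽₂^k} has Hamming weight at least d+1. -/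
open Finset

/-- Standard inner product on `𝔽₂^k`. -/
def dotp {k : ℕ} (a b : Fin k → ZMod 2) : ZMod 2 := ∑ i, a i * b i

/-- The Walsh–Hadamard transform of `F : 𝔽₂^k → 𝔽₂^k` at `(a, b)`, as an integer. -/
def walsh {k : ℕ} (F : (Fin k → ZMod 2) → (Fin k → ZMod 2)) (a b : Fin k → ZMod 2) : ℤ :=
  ∑ x : Fin k → ZMod 2, (-1 : ℤ) ^ (dotp a x + dotp b (F x)).val

/-- A pair `(F₁, F₂)` of permutations of `𝔽₂^k` is a Correlation Immune Pair of strength `d`. -/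
def CIP {k : ℕ} (F₁ F₂ : (Fin k → ZMod 2) → (Fin k → ZMod 2)) (d : ℕ) : Prop :=
  ∀ a b c : Fin k → ZMod 2, a ≠ 0 →
    hammingNorm a + hammingNorm b + hammingNorm c ≤ d →
    walsh F₁ a b = 0 ∨ walsh F₂ a c = 0

lemma dotp_comm {k : ℕ} (a b : Fin k → ZMod 2) : dotp a b = dotp b a := by
  simp [dotp, mul_comm]

lemma dotp_add_right {k : ℕ} (a b c : Fin k → ZMod 2) :
    dotp a (b + c) = dotp a b + dotp a c := by
  simp [dotp, mul_add, Finset.sum_add_distrib]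

lemma dotp_single {k : ℕ} (i : Fin k) (w : Fin k → ZMod 2) :
    dotp (Pi.single i 1) w = w i := by
  simp [dotp, Pi.single_apply, ite_mul]

lemma dotp_zero_right {k : ℕ} (a : Fin k → ZMod 2) : dotp a 0 = 0 := by
  simp [dotp]

lemma dotp_nondegenerate {k : ℕ} {w : Fin k → ZMod 2}
    (h : ∀ x, dotp x w = 0) : w = 0 := by
  funext i
  have := h (Pi.single i 1)
  rwa [dotp_single] at this

lemma neg_one_pow_succ (t : ZMod 2) : (-1:ℤ)^(t+1).val = -(-1)^t.val := by
  fin_cases t <;> decide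

lemma char_sum {k : ℕ} (w : Fin k → ZMod 2) :
    ∑ x : Fin k → ZMod 2, (-1:ℤ)^(dotp x w).val = if w = 0 then 2^k else 0 := by
  split_ifs with h
  · subst h
    simp [dotp_zero_right]
  · obtain ⟨i, hi⟩ := Function.ne_iff.mp h
    have hw1 : w i = 1 := by
      have h2 : ∀ t : ZMod 2, t ≠ 0 → t = 1 := by decide
      exact h2 _ (by simpa using hi)
    set e : Fin k → ZMod 2 := Pi.single i 1 with he
    have key : ∑ x : Fin k → ZMod 2, (-1:ℤ)^(dotp x w).val
        = ∑ x : Fin k → ZMod 2, (-1:ℤ)^(dotp (x + e) w).val :=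
      (Fintype.sum_equiv (Equiv.addRight e) _ _ (fun x => rfl)).symm
    have step : ∀ x : Fin k → ZMod 2,
        (-1:ℤ)^(dotp (x + e) w).val = -(-1:ℤ)^(dotp x w).val := by
      intro x
      have : dotp (x + e) w = dotp x w + 1 := by
        rw [dotp_comm, dotp_add_right, dotp_comm w x, dotp_comm w e, he, dotp_single, hw1]
      rw [this, neg_one_pow_succ]
    rw [Finset.sum_congr rfl (fun x _ => step x), Finset.sum_neg_distrib] at key
    linarith

lemma walsh_linear {k : ℕ} (F G : (Fin k → ZMod 2) ≃ₗ[ZMod 2] (Fin k → ZMod 2))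
    (hG : ∀ x y : Fin k → ZMod 2, dotp (F x) y = dotp x (G.symm y))
    (a b : Fin k → ZMod 2) :
    walsh (⇑F) a b = if b = G a then 2^k else 0 := by
  have h1 : ∀ x, dotp a x + dotp b (F x) = dotp x (a + G.symm b) := by
    intro x
    rw [dotp_add_right, dotp_comm a x, dotp_comm b (F x), hG]
  have h2 : walsh (⇑F) a b = ∑ x : Fin k → ZMod 2, (-1:ℤ)^(dotp x (a + G.symm b)).val := by
    unfold walsh; exact Finset.sum_congr rfl (fun x _ => by rw [h1])
  rw [h2, char_sum]
  congr 1
  simp only [eq_iff_iff]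
  constructor
  · intro h
    have hself : a + a = 0 := by funext i; show a i + a i = 0; exact CharTwo.add_self_eq_zero (a i)
    have h2 := congrArg (fun v => a + v) h
    simp only [← add_assoc, hself, zero_add, add_zero] at h2
    rw [← h2]; simp
  · intro h
    rw [h]
    simp only [LinearEquiv.symm_apply_apply]
    funext i; show a i + a i = 0; exact CharTwo.add_self_eq_zero (a i)


/-- For invertible linear maps `F₁, F₂` with `G₁ = (F₁*)⁻¹`, `G₂ = (F₂*)⁻¹`
(the adjoint conditions are phrased via the standard bilinear form), the dual of the code
`C(F₁,F₂) = {(x+y, F₁ x, F₂ y)}` is the `[3k,k]` code `{(u, G₁ u, G₂ u)}`; moreover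
`(F₁,F₂)` is a CIP of strength `d` iff every nonzero codeword of the latter code has
Hamming weight at least `d+1`. -/
theorem stmt3 {k : ℕ} (hk : 1 ≤ k) (d : ℕ)
    (F₁ F₂ G₁ G₂ : (Fin k → ZMod 2) ≃ₗ[ZMod 2] (Fin k → ZMod 2))
    -- `F₁* = G₁⁻¹`, i.e. `G₁ = (F₁*)⁻¹`:
    (hG₁ : ∀ x y : Fin k → ZMod 2, dotp (F₁ x) y = dotp x (G₁.symm y))
    -- `F₂* = G₂⁻¹`, i.e. `G₂ = (F₂*)⁻¹`:
    (hG₂ : ∀ x y : Fin k → ZMod 2, dotp (F₂ x) y = dotp x (G₂.symm y)) :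
    {v : (Fin k → ZMod 2) × (Fin k → ZMod 2) × (Fin k → ZMod 2) |
        ∀ x y : Fin k → ZMod 2,
          dotp v.1 (x + y) + dotp v.2.1 (F₁ x) + dotp v.2.2 (F₂ y) = 0}
      = {v | ∃ u : Fin k → ZMod 2, v = (u, G₁ u, G₂ u)}
    ∧ (CIP (⇑F₁) (⇑F₂) d ↔
        ∀ u : Fin k → ZMod 2, u ≠ 0 →
          d + 1 ≤ hammingNorm u + hammingNorm (G₁ u) + hammingNorm (G₂ u)) := by
  have pow_ne : (2:ℤ)^k ≠ 0 := pow_ne_zero _ (by norm_num)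
  have w₁ := walsh_linear F₁ G₁ hG₁
  have w₂ := walsh_linear F₂ G₂ hG₂
  have w₁iff : ∀ a b, walsh (⇑F₁) a b = 0 ↔ b ≠ G₁ a := by
    intro a b; rw [w₁]; split_ifs with h <;> simp [h, pow_ne]
  have w₂iff : ∀ a c, walsh (⇑F₂) a c = 0 ↔ c ≠ G₂ a := by
    intro a c; rw [w₂]; split_ifs with h <;> simp [h, pow_ne]
  have recover : ∀ (F G : (Fin k → ZMod 2) ≃ₗ[ZMod 2] (Fin k → ZMod 2)),
      (∀ x y : Fin k → ZMod 2, dotp (F x) y = dotp x (G.symm y)) →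
      ∀ (a b : Fin k → ZMod 2), (∀ x, dotp a x + dotp b (F x) = 0) → b = G a := by
    intro F G hG a b h
    have key : ∀ x, dotp x (a + G.symm b) = 0 := by
      intro x
      rw [dotp_add_right, dotp_comm x a, ← hG x b, dotp_comm (F x) b]
      exact h x
    have h0 := dotp_nondegenerate key
    have hself : a + a = 0 := by
      funext i; show a i + a i = 0; exact CharTwo.add_self_eq_zero (a i)
    have h2 := congrArg (fun v => a + v) h0
    simp only [← add_assoc, hself, zero_add, add_zero] at h2
    rw [← h2]; simp
  constructor
  · ext ⟨a, b, c⟩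
    simp only [Set.mem_setOf_eq]
    constructor
    · intro h
      have hb : b = G₁ a := by
        refine recover F₁ G₁ hG₁ a b (fun x => ?_)
        have := h x 0
        simpa [dotp_zero_right, map_zero] using this
      have hc : c = G₂ a := by
        refine recover F₂ G₂ hG₂ a c (fun y => ?_)
        have := h 0 y
        simpa [dotp_zero_right, map_zero] using this
      exact ⟨a, by rw [hb, hc]⟩
    · rintro ⟨u, hu⟩ x y
      obtain ⟨rfl, rfl, rfl⟩ : a = u ∧ b = G₁ u ∧ c = G₂ u := by
        simpa [Prod.ext_iff] using hu
      have e1 : dotp (G₁ a) (F₁ x) = dotp a x := by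
        rw [dotp_comm, hG₁, LinearEquiv.symm_apply_apply, dotp_comm]
      have e2 : dotp (G₂ a) (F₂ y) = dotp a y := by
        rw [dotp_comm, hG₂, LinearEquiv.symm_apply_apply, dotp_comm]
      rw [dotp_add_right, e1, e2]
      have : ∀ s t : ZMod 2, s + t + s + t = 0 := by decide
      exact this _ _
  · constructor
    · intro hC u hu
      by_contra hlt
      push_neg at hlt
      rcases hC u (G₁ u) (G₂ u) hu (by omega) with h | h
      · rw [w₁iff] at h; exact h rfl
      · rw [w₂iff] at h; exact h rfl
    · intro hW a b c ha hle
      by_contra h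
      push_neg at h
      obtain ⟨h1, h2⟩ := h
      have hb : b = G₁ a := by by_contra hb; exact h1 ((w₁iff a b).mpr hb)
      have hc : c = G₂ a := by by_contra hc; exact h2 ((w₂iff a c).mpr hc)
      subst hb; subst hc
      have := hW a ha
      omega
end

section
/- Let δ ∈ (0, 1/2) satisfy H(δ) < 1/3, where H is the binary entropy function. Then there exists K such that for every k ≥ K there exist invertible k × k matrices A₁, A₂ over 𝔽₂ such that the binary [3k, k] linear code with generator matrix (I_k | A₁ | A₂), namely {(u, u A₁, u A₂) : u ∈ 𝔽₂^k}, has minimum Hamming distance greater than 3δk. In particular, there exist arbitrarily long 3-CIS codes of relative distance at least δ for every δ with H(δ) < 1/3. -/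
open Finset

/-- The binary entropy function `H(x) = −x log₂ x − (1−x) log₂ (1−x)`. -/
noncomputable def binH (x : ℝ) : ℝ := -x * Real.logb 2 x - (1 - x) * Real.logb 2 (1 - x)

/-!
Pick `g₁, g₂ ∈ GL(k, 𝔽₂)` uniformly and independently. `GL` acts transitively on nonzero vectors,
so for a fixed `u ≠ 0` the pair `(g₁ u, g₂ u)` is uniform on pairs of nonzero vectors. A union
bound over `u` shows that the number of bad pairs `(g₁, g₂)` is at most `|GL|² / (2ᵏ - 1)²` times
the number of triples `(u, v, w)` of total weight `≤ 3δk`, i.e. the size of a Hamming ball of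
radius `3δk` in `𝔽₂^{3k}`. That ball has at most `2^{3k H(δ)} < 2ᵏ ≤ (2ᵏ - 1)²` points, so some
pair is good, and `Aᵢ = gᵢᵀ` since the code is `u ↦ u Aᵢ`.
-/

lemma hammingNorm_sumElim {ι κ β : Type*} [Fintype ι] [Fintype κ] [Zero β] [DecidableEq β]
    (x : ι → β) (y : κ → β) :
    hammingNorm (Sum.elim x y) = hammingNorm x + hammingNorm y := by
  simp only [hammingNorm, card_filter, Fintype.sum_sum_type, Sum.elim_inl, Sum.elim_inr]
  rfl

section HammingBall

variable {ι : Type*} [Fintype ι] [DecidableEq ι]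

lemma sum_pow_hammingNorm_mul_pow (a b : ℝ) :
    ∑ x : ι → ZMod 2, a ^ hammingNorm x * b ^ (Fintype.card ι - hammingNorm x)
      = (b + a) ^ Fintype.card ι := by
  have hterm : ∀ x : ι → ZMod 2, a ^ hammingNorm x * b ^ (Fintype.card ι - hammingNorm x)
      = ∏ i, if x i = 0 then b else a := by
    intro x
    rw [prod_ite, prod_const, prod_const, mul_comm]
    congr 2
    rw [← card_univ, ← card_filter_add_card_filter_not (fun i => x i = 0)]
    simp [hammingNorm]
  have hcoord : ∑ c : ZMod 2, (if c = 0 then b else a) = b + a :=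
    Fin.sum_univ_two (fun c : Fin 2 => if c = 0 then b else a)
  simp_rw [hterm]
  rw [← Fintype.prod_sum (fun _ c => if c = 0 then b else a), hcoord, prod_const, card_univ]

/-- Each point of the ball has weight at least `2^{-nH(p)}` under the `p`-biased product measure,
whose total mass is `1`. -/
lemma card_hammingBall_le {p : ℝ} (hp0 : 0 < p) (hp : p ≤ 1 / 2) :
    (#{x : ι → ZMod 2 | (hammingNorm x : ℝ) ≤ p * Fintype.card ι} : ℝ)
      ≤ 2 ^ (Fintype.card ι * binH p) := by
  set n := Fintype.card ι
  set f : (ι → ZMod 2) → ℝ := fun x => p ^ hammingNorm x * (1 - p) ^ (n - hammingNorm x)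
  have hq : 0 < 1 - p := by linarith
  have hf : ∀ x, 0 < f x := fun x => mul_pos (pow_pos hp0 _) (pow_pos hq _)
  have hsum : ∑ x, f x = 1 := by simp [f, n, sum_pow_hammingNorm_mul_pow]
  have hlog : Real.logb 2 p ≤ Real.logb 2 (1 - p) :=
    Real.logb_le_logb_of_le (by norm_num) hp0 (by linarith)
  have hlow : ∀ x : ι → ZMod 2, (hammingNorm x : ℝ) ≤ p * n → 2 ^ (-(n * binH p)) ≤ f x := by
    intro x hx
    have hw : hammingNorm x ≤ n := hammingNorm_le_card_fintype
    rw [← Real.le_logb_iff_rpow_le one_lt_two (hf x), Real.logb_mul (pow_pos hp0 _).ne'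
      (pow_pos hq _).ne', Real.logb_pow, Real.logb_pow, Nat.cast_sub hw, binH]
    nlinarith [mul_nonneg (sub_nonneg.2 hx) (sub_nonneg.2 hlog)]
  have hcard : (#{x : ι → ZMod 2 | (hammingNorm x : ℝ) ≤ p * n} : ℝ) * 2 ^ (-(n * binH p)) ≤ 1 :=
    calc _ = ∑ x ∈ {x : ι → ZMod 2 | (hammingNorm x : ℝ) ≤ p * n}, (2 : ℝ) ^ (-(n * binH p)) := by
          rw [sum_const, nsmul_eq_mul]
      _ ≤ ∑ x ∈ {x : ι → ZMod 2 | (hammingNorm x : ℝ) ≤ p * n}, f x :=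
          sum_le_sum fun x hx => hlow x (mem_filter.1 hx).2
      _ ≤ ∑ x, f x := sum_le_univ_sum_of_nonneg fun x => (hf x).le
      _ = 1 := hsum
  rwa [Real.rpow_neg zero_le_two, ← div_eq_mul_inv, div_le_one (by positivity)] at hcard

lemma card_hammingBall_prod_le {p : ℝ} (hp0 : 0 < p) (hp : p ≤ 1 / 2) :
    (#{t : (ι → ZMod 2) × (ι → ZMod 2) × (ι → ZMod 2) |
        (hammingNorm t.1 + hammingNorm t.2.1 + hammingNorm t.2.2 : ℝ) ≤ 3 * p * Fintype.card ι} : ℝ)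
      ≤ 2 ^ (3 * Fintype.card ι * binH p) := by
  let e : (ι ⊕ ι ⊕ ι → ZMod 2) ≃ (ι → ZMod 2) × (ι → ZMod 2) × (ι → ZMod 2) :=
    (Equiv.sumArrowEquivProdArrow _ _ _).trans
      (Equiv.prodCongr (Equiv.refl _) (Equiv.sumArrowEquivProdArrow _ _ _))
  have hcard : Fintype.card (ι ⊕ ι ⊕ ι) = 3 * Fintype.card ι := by
    simp only [Fintype.card_sum]; ring
  have hball := card_hammingBall_le (ι := ι ⊕ ι ⊕ ι) hp0 hp
  rw [hcard, Nat.cast_mul, Nat.cast_ofNat, ← mul_assoc, mul_comm p 3] at hball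
  refine le_of_eq_of_le ?_ hball
  congr 1
  refine card_equiv e.symm fun ⟨u, v, w⟩ => ?_
  simp only [mem_filter, mem_univ, true_and]
  change _ ↔ (hammingNorm (Sum.elim u (Sum.elim v w)) : ℝ) ≤ _
  rw [hammingNorm_sumElim, hammingNorm_sumElim, Nat.cast_add, Nat.cast_add, add_assoc]

end HammingBall

lemma two_rpow_lt_sq_two_pow_sub_one {k : ℕ} (hk : 2 ≤ k) {h : ℝ} (hh : h < 1 / 3) :
    (2 : ℝ) ^ (3 * k * h) < ((2 ^ k - 1) ^ 2 : ℕ) := by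
  have hpow : 4 ≤ 2 ^ k := (Nat.pow_le_pow_right two_pos hk).trans_eq' rfl
  have hsq : 2 ^ k ≤ (2 ^ k - 1) ^ 2 := by
    obtain ⟨m, hm⟩ : ∃ m, 2 ^ k = m + 1 := ⟨2 ^ k - 1, by omega⟩
    rw [hm, Nat.add_sub_cancel]
    nlinarith
  have hk0 : (0 : ℝ) < k := by exact_mod_cast (by omega : 0 < k)
  calc (2 : ℝ) ^ (3 * k * h) < 2 ^ (k : ℝ) :=
        Real.rpow_lt_rpow_of_exponent_lt one_lt_two (by nlinarith [mul_pos hk0 (sub_pos.2 hh)])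
    _ = ((2 ^ k : ℕ) : ℝ) := by rw [Real.rpow_natCast]; push_cast; rfl
    _ ≤ ((2 ^ k - 1) ^ 2 : ℕ) := by exact_mod_cast hsq

lemma card_filter_smul_eq_of_smul_eq {G X : Type*} [Group G] [Fintype G] [MulAction G X]
    [DecidableEq X] (x : X) {y z : X} {c : G} (hc : c • y = z) :
    #{g : G | g • x = y} = #{g : G | g • x = z} :=
  card_equiv (Equiv.mulLeft c) fun g => by simp [← hc, mul_smul]

lemma exists_linearEquiv_apply_eq {K V : Type*} [Field K] [AddCommGroup V] [Module K V] {v w : V}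
    (hv : v ≠ 0) (hw : w ≠ 0) : ∃ e : V ≃ₗ[K] V, e v = w := by
  obtain ⟨e, he⟩ := Submodule.exists_linearEquiv_restrict_eq
    ((LinearEquiv.coord K V v hv).trans (LinearEquiv.toSpanNonzeroSingleton K V w hw))
  refine ⟨e, ?_⟩
  rw [← he ⟨v, Submodule.mem_span_singleton_self v⟩]
  simp [LinearEquiv.coord_self]

namespace Matrix.GeneralLinearGroup

variable {n K : Type*} [Fintype n] [DecidableEq n] [Field K]

lemma exists_smul_eq {v w : n → K} (hv : v ≠ 0) (hw : w ≠ 0) : ∃ g : GL n K, g • v = w := by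
  obtain ⟨e, he⟩ := exists_linearEquiv_apply_eq (K := K) hv hw
  refine ⟨Units.map (LinearMap.toMatrixAlgEquiv' (R := K) (n := n)).toMonoidHom
    ((LinearMap.GeneralLinearGroup.generalLinearEquiv K _).symm e), ?_⟩
  rw [Units.smul_def, smul_eq_mulVec, ← toLinAlgEquiv'_apply]
  show toLinAlgEquiv' (LinearMap.toMatrixAlgEquiv' _) v = w
  rw [toLinAlgEquiv'_toMatrixAlgEquiv']
  exact he

variable [Fintype K] [DecidableEq K]

lemma card_filter_smul_eq_mul {u v : n → K} (hu : u ≠ 0) (hv : v ≠ 0) :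
    #{g : GL n K | g • u = v} * (Fintype.card K ^ Fintype.card n - 1)
      = Fintype.card (GL n K) := by
  have hfiber : ∀ w ∈ ({w | w ≠ 0} : Finset (n → K)),
      #{g : GL n K | g • u = w} = #{g : GL n K | g • u = v} := by
    intro w hw
    obtain ⟨c, hc⟩ := exists_smul_eq (mem_filter.1 hw).2 hv
    exact card_filter_smul_eq_of_smul_eq u hc
  have hnonzero : #({w | w ≠ 0} : Finset (n → K)) = Fintype.card K ^ Fintype.card n - 1 := by
    rw [filter_ne', card_erase_of_mem (mem_univ _), card_univ, Fintype.card_fun]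
  calc #{g : GL n K | g • u = v} * (Fintype.card K ^ Fintype.card n - 1)
      = ∑ w ∈ ({w | w ≠ 0} : Finset (n → K)), #{g : GL n K | g • u = w} := by
        rw [sum_congr rfl hfiber, sum_const, smul_eq_mul, hnonzero, mul_comm]
    _ = #(univ : Finset (GL n K)) :=
        (card_eq_sum_card_fiberwise (f := fun g : GL n K => g • u) fun g _ =>
          mem_filter.2 ⟨mem_univ _, (smul_ne_zero_iff_ne g).2 hu⟩).symm
    _ = Fintype.card (GL n K) := card_univ

lemma card_filter_smul_smul_mul {u : n → K} (hu : u ≠ 0)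
    (P : (n → K) → (n → K) → Prop) [DecidableRel P] :
    #{p : GL n K × GL n K | P (p.1 • u) (p.2 • u)} * (Fintype.card K ^ Fintype.card n - 1) ^ 2
      = #{q : (n → K) × (n → K) | q.1 ≠ 0 ∧ q.2 ≠ 0 ∧ P q.1 q.2} * Fintype.card (GL n K) ^ 2 := by
  set T : Finset ((n → K) × (n → K)) := {q | q.1 ≠ 0 ∧ q.2 ≠ 0 ∧ P q.1 q.2}
  have hfiber : ∀ q ∈ T,
      #{p ∈ ({p | P (p.1 • u) (p.2 • u)} : Finset (GL n K × GL n K)) | (p.1 • u, p.2 • u) = q}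
        * (Fintype.card K ^ Fintype.card n - 1) ^ 2 = Fintype.card (GL n K) ^ 2 := by
    rintro ⟨v, w⟩ hq
    obtain ⟨hv, hw, hvw⟩ := (mem_filter.1 hq).2
    have hprod : #{p ∈ ({p | P (p.1 • u) (p.2 • u)} : Finset (GL n K × GL n K)) |
        (p.1 • u, p.2 • u) = (v, w)} = #{g : GL n K | g • u = v} * #{g : GL n K | g • u = w} := by
      rw [← card_product]
      congr 1
      ext ⟨g₁, g₂⟩
      simp only [mem_filter, mem_univ, true_and, mem_product, Prod.mk.injEq]
      constructor
      · exact fun h => h.2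
      · rintro ⟨rfl, rfl⟩; exact ⟨hvw, rfl, rfl⟩
    rw [hprod, sq, sq, mul_mul_mul_comm, card_filter_smul_eq_mul hu hv,
      card_filter_smul_eq_mul hu hw]
  rw [card_eq_sum_card_fiberwise (f := fun p : GL n K × GL n K => (p.1 • u, p.2 • u)) (t := T)
      fun p hp => mem_filter.2 ⟨mem_univ _,
        (smul_ne_zero_iff_ne p.1).2 hu, (smul_ne_zero_iff_ne p.2).2 hu, (mem_filter.1 hp).2⟩,
    sum_mul, sum_congr rfl hfiber, sum_const, smul_eq_mul]

lemma exists_forall_hammingNorm_add_gt (r : ℝ)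
    (hr : #{t : (n → K) × (n → K) × (n → K) |
      (hammingNorm t.1 + hammingNorm t.2.1 + hammingNorm t.2.2 : ℝ) ≤ r}
        < (Fintype.card K ^ Fintype.card n - 1) ^ 2) :
    ∃ g₁ g₂ : GL n K, ∀ u : n → K, u ≠ 0 →
      r < hammingNorm u + hammingNorm (g₁ • u) + hammingNorm (g₂ • u) := by
  set N := Fintype.card K ^ Fintype.card n - 1
  let bad (u : n → K) : Finset (GL n K × GL n K) :=
    {p | (hammingNorm u + hammingNorm (p.1 • u) + hammingNorm (p.2 • u) : ℝ) ≤ r}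
  have hbad : ∀ u ∈ ({u | u ≠ 0} : Finset (n → K)), #(bad u) * N ^ 2 ≤
      #{q : (n → K) × (n → K) | (hammingNorm u + hammingNorm q.1 + hammingNorm q.2 : ℝ) ≤ r}
        * Fintype.card (GL n K) ^ 2 := by
    intro u hu
    rw [card_filter_smul_smul_mul (mem_filter.1 hu).2
      fun v w => (hammingNorm u + hammingNorm v + hammingNorm w : ℝ) ≤ r]
    exact Nat.mul_le_mul_right _ (card_le_card fun q hq =>
      mem_filter.2 ⟨mem_univ _, (mem_filter.1 hq).2.2.2⟩)
  have hslices : ∑ u : n → K, #{q : (n → K) × (n → K) |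
      (hammingNorm u + hammingNorm q.1 + hammingNorm q.2 : ℝ) ≤ r}
      = #{t : (n → K) × (n → K) × (n → K) |
          (hammingNorm t.1 + hammingNorm t.2.1 + hammingNorm t.2.2 : ℝ) ≤ r} := by
    simp only [card_filter, Fintype.sum_prod_type]
  have hsum : ∑ u ∈ ({u | u ≠ 0} : Finset (n → K)), #(bad u)
      < #(univ : Finset (GL n K × GL n K)) := by
    rw [card_univ, Fintype.card_prod, ← sq]
    refine Nat.lt_of_mul_lt_mul_right (a := N ^ 2) ?_
    calc (∑ u ∈ ({u | u ≠ 0} : Finset (n → K)), #(bad u)) * N ^ 2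
        ≤ ∑ u : n → K, #{q : (n → K) × (n → K) |
            (hammingNorm u + hammingNorm q.1 + hammingNorm q.2 : ℝ) ≤ r}
              * Fintype.card (GL n K) ^ 2 := by
          rw [sum_mul]
          exact (sum_le_sum hbad).trans (sum_le_univ_sum_of_nonneg fun _ => Nat.zero_le _)
      _ < Fintype.card (GL n K) ^ 2 * N ^ 2 := by
          rw [← sum_mul, hslices, mul_comm _ (N ^ 2)]
          exact Nat.mul_lt_mul_of_pos_right hr (pow_pos Fintype.card_pos 2)
  obtain ⟨p, -, hp⟩ := exists_mem_notMem_of_card_lt_card (card_biUnion_le.trans_lt hsum)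
  refine ⟨p.1, p.2, fun u hu => lt_of_not_ge fun hle => hp ?_⟩
  exact mem_biUnion.2 ⟨u, mem_filter.2 ⟨mem_univ _, hu⟩, mem_filter.2 ⟨mem_univ _, hle⟩⟩

end Matrix.GeneralLinearGroup

/-- Gilbert–Varshamov-type existence of good long 3-CIS codes: if `H(δ) < 1/3` then for all
sufficiently large `k` there are invertible `A₁, A₂ ∈ GL(k,𝔽₂)` such that the `[3k,k]`
code `{(u, u A₁, u A₂)}` has minimum distance greater than `3δk`. -/
theorem stmt9 (δ : ℝ) (hδ : δ ∈ Set.Ioo (0 : ℝ) (1 / 2)) (hH : binH δ < 1 / 3) :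
    ∃ K : ℕ, ∀ k : ℕ, K ≤ k →
      ∃ A₁ A₂ : Matrix (Fin k) (Fin k) (ZMod 2), IsUnit A₁ ∧ IsUnit A₂ ∧
        ∀ u : Fin k → ZMod 2, u ≠ 0 →
          3 * δ * k < (hammingNorm u + hammingNorm (Matrix.vecMul u A₁)
            + hammingNorm (Matrix.vecMul u A₂) : ℝ) := by
  obtain ⟨hδ0, hδ2⟩ := hδ
  refine ⟨2, fun k hk => ?_⟩
  have hball := card_hammingBall_prod_le (ι := Fin k) hδ0 hδ2.le
  rw [Fintype.card_fin] at hball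
  obtain ⟨g₁, g₂, hg⟩ := Matrix.GeneralLinearGroup.exists_forall_hammingNorm_add_gt
    (n := Fin k) (K := ZMod 2) (3 * δ * k) (by
      rw [ZMod.card, Fintype.card_fin]
      exact_mod_cast hball.trans_lt (two_rpow_lt_sq_two_pow_sub_one hk hH))
  refine ⟨(g₁ : Matrix (Fin k) (Fin k) (ZMod 2)).transpose,
    (g₂ : Matrix (Fin k) (Fin k) (ZMod 2)).transpose,
    (Matrix.isUnit_transpose _).2 g₁.isUnit, (Matrix.isUnit_transpose _).2 g₂.isUnit, fun u hu => ?_⟩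
  simpa [Matrix.vecMul_transpose, Units.smul_def] using hg u hu
end

section
/- Let M be a matroid on a finite ground set E and let t ≥ 1. Then E can be partitioned into t (possibly empty) pairwise disjoint independent sets of M whose union is E if and only if there is no subset S ⊆ E with |S| > t · rank(S), i.e., if and only if |S| ≤ t · rank(S) for every S ⊆ E. -/
/-!
A packing is a family of pairwise disjoint independent sets. If a packing `I` with `t` parts
covers the ground set, each part meets `S` in an independent set, so `|S| ≤ t · r(S)`.

Conversely, an element `e` outside `I` can be added to the packing whenever it has an augmenting
path: a chain `e = y₀, y₁, …, yₙ` in which each `yₖ` may replace `yₖ₊₁` in the part containing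
`yₖ₊₁`, and `yₙ` may be inserted into some part. Performing the first exchange of a shortest such
path leaves an augmenting path from the displaced element, so induction on the length enlarges
the packing by `e`. If `e` has no augmenting path, the set `A` of all elements without one is
closed under exchanges and contains no insertable element, so `A` lies in the closure of
`A ∩ Iᵢ` for every `i`. Then `t · r(A) ≤ ∑ᵢ |A ∩ Iᵢ| < |A|`, since `e ∈ A` lies in no part.
-/

/-- The rank of a set `S` in a matroid `M`: the common (here: maximal) size of
independent subsets of `S`. -/
noncomputable def matroidRank {α : Type*} (M : Matroid α) (S : Set α) : ℕ :=
  sSup (Set.ncard '' {I : Set α | M.Indep I ∧ I ⊆ S})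

open Set Function

namespace Set

variable {α ι : Type*}

lemma iUnion_subset_union_iUnion_update [DecidableEq ι] (I : ι → Set α) (i : ι) (X : Set α) :
    ⋃ j, I j ⊆ I i ∪ ⋃ j, update I i X j := by
  refine iUnion_subset fun j ↦ ?_
  rcases eq_or_ne j i with rfl | hj
  · exact subset_union_left
  · exact subset_union_of_subset_right (subset_iUnion_of_subset j (by rw [update_of_ne hj])) _

lemma subset_iUnion_update [DecidableEq ι] (I : ι → Set α) (i : ι) (X : Set α) :
    X ⊆ ⋃ j, update I i X j :=
  subset_iUnion_of_subset i (by rw [update_self])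

lemma ncard_inter_iUnion [Fintype ι] {I : ι → Set α} (hI : Pairwise (Disjoint on I)) {S : Set α}
    (hS : S.Finite) : (S ∩ ⋃ i, I i).ncard = ∑ i, (S ∩ I i).ncard := by
  rw [inter_iUnion, ncard_iUnion_of_finite (fun i ↦ hS.subset inter_subset_left)
    (fun i j hij ↦ (hI hij).mono inter_subset_right inter_subset_right), finsum_eq_sum_of_fintype]

end Set

section matroidRank

variable {α : Type*} {M : Matroid α} {S K : Set α}

lemma matroidRank_le {c : ℕ} (h : ∀ K, M.Indep K → K ⊆ S → K.ncard ≤ c) :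
    matroidRank M S ≤ c :=
  csSup_le ⟨_, ∅, ⟨M.empty_indep, empty_subset S⟩, rfl⟩ <| by
    rintro _ ⟨K, ⟨hK, hKS⟩, rfl⟩
    exact h K hK hKS

lemma ncard_le_matroidRank (hS : S.Finite) (hK : M.Indep K) (hKS : K ⊆ S) :
    K.ncard ≤ matroidRank M S := by
  refine le_csSup ⟨S.ncard, ?_⟩ ⟨K, ⟨hK, hKS⟩, rfl⟩
  rintro _ ⟨L, ⟨-, hLS⟩, rfl⟩
  exact ncard_le_ncard hLS hS

end matroidRank

namespace Matroid

variable {α ι : Type*} {M : Matroid α}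

lemma Indep.ncard_le_ncard_of_subset_closure {K B : Set α} (hK : M.Indep K) (hB : M.Indep B)
    (hBfin : B.Finite) (hKB : K ⊆ M.closure B) : K.ncard ≤ B.ncard := by
  have : K.encard ≤ B.encard := calc
    K.encard ≤ M.eRk (M.closure B) := hK.encard_le_eRk_of_subset hKB
    _ = B.encard := by rw [eRk_closure_eq, hB.eRk_eq_encard]
  exact ENat.toNat_le_toNat this hBfin.encard_lt_top.ne

lemma Indep.insert_indep_of_subset_closure {X K : Set α} {y : α} (h : M.Indep (insert y X))
    (hyX : y ∉ X) (hK : M.Indep K) (hKX : K ⊆ M.closure X) (hyK : y ∉ K) :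
    M.Indep (insert y K) := by
  obtain ⟨hyE, hycl⟩ := ((h.subset (subset_insert y X)).insert_indep_iff_of_notMem hyX).1 h
  exact (hK.insert_indep_iff_of_notMem hyK).2
    ⟨hyE, fun hy ↦ hycl (M.closure_subset_closure_of_subset_closure hKX hy)⟩

lemma Indep.mem_closure_of_forall_not_indep_insert_sdiff {I J : Set α} {x : α} (hI : M.Indep I)
    (hx : x ∈ M.closure I) (hxI : x ∉ I)
    (h : ∀ w ∈ I \ J, ¬ M.Indep (insert x (I \ {w}))) : x ∈ M.closure J := by
  have hC := hI.fundCircuit_isCircuit hx hxI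
  refine M.closure_subset_closure ?_ (hC.mem_closure_sdiff_singleton_of_mem (M.mem_fundCircuit x I))
  rintro w ⟨hwC, hwx : w ≠ x⟩
  have hwI : w ∈ I := (M.fundCircuit_subset_insert x I hwC).resolve_left hwx
  by_contra hwJ
  refine h w ⟨hwI, hwJ⟩ ?_
  rw [insert_sdiff_singleton_comm hwx.symm]
  exact (hI.mem_fundCircuit_iff hx hxI).1 hwC

def IsIndepPacking (M : Matroid α) (I : ι → Set α) : Prop :=
  (∀ i, M.Indep (I i)) ∧ Pairwise (Disjoint on I)

def CanInsert (M : Matroid α) (I : ι → Set α) (y : α) : Prop :=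
  ∃ i, y ∉ I i ∧ M.Indep (insert y (I i))

def CanExchange (M : Matroid α) (I : ι → Set α) (y x : α) : Prop :=
  ∃ i, y ∉ I i ∧ x ∈ I i ∧ M.Indep (insert y (I i \ {x}))

inductive HasAugPath (M : Matroid α) (I : ι → Set α) : α → ℕ → Prop
  | sink {y : α} : M.CanInsert I y → M.HasAugPath I y 0
  | step {y x : α} {n : ℕ} : M.CanExchange I y x → M.HasAugPath I x n → M.HasAugPath I y (n + 1)

variable {I : ι → Set α}

lemma IsIndepPacking.update [DecidableEq ι] (hI : M.IsIndepPacking I) (i : ι)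
    {X : Set α} (hX : M.Indep X) (hXI : ∀ j ≠ i, Disjoint X (I j)) :
    M.IsIndepPacking (update I i X) := by
  refine ⟨(forall_update_iff I fun _ s ↦ M.Indep s).2 ⟨hX, fun j _ ↦ hI.1 j⟩, fun j k hjk ↦ ?_⟩
  change Disjoint (Function.update I i X j) (Function.update I i X k)
  rcases eq_or_ne j i with rfl | hj
  · rw [update_self, update_of_ne hjk.symm]
    exact hXI k hjk.symm
  rcases eq_or_ne k i with rfl | hk
  · rw [update_self, update_of_ne hj]
    exact (hXI j hj).symm
  rw [update_of_ne hj, update_of_ne hk]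
  exact hI.2 hjk

lemma IsIndepPacking.ncard_inter_iUnion_le_mul_matroidRank [Fintype ι] (hI : M.IsIndepPacking I)
    {S : Set α} (hS : S.Finite) : (S ∩ ⋃ i, I i).ncard ≤ Fintype.card ι * matroidRank M S := calc
  (S ∩ ⋃ i, I i).ncard = ∑ i, (S ∩ I i).ncard := ncard_inter_iUnion hI.2 hS
  _ ≤ ∑ _i : ι, matroidRank M S := Finset.sum_le_sum fun i _ ↦
    ncard_le_matroidRank hS ((hI.1 i).subset inter_subset_right) inter_subset_left
  _ = Fintype.card ι * matroidRank M S := by simp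

lemma subset_closure_inter_of_forall_not_canInsert (hI : ∀ i, M.Indep (I i)) {A : Set α}
    (hAE : A ⊆ M.E) (hins : ∀ y ∈ A, ¬ M.CanInsert I y)
    (hexch : ∀ y ∈ A, ∀ x, M.CanExchange I y x → x ∈ A) (i : ι) :
    A ⊆ M.closure (A ∩ I i) := by
  intro y hyA
  by_cases hyi : y ∈ I i
  · exact M.subset_closure _ (inter_subset_right.trans (hI i).subset_ground) ⟨hyA, hyi⟩
  have hycl : y ∈ M.closure (I i) :=
    (hI i).mem_closure_iff'.2 ⟨hAE hyA, fun h ↦ absurd ⟨i, hyi, h⟩ (hins y hyA)⟩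
  refine (hI i).mem_closure_of_forall_not_indep_insert_sdiff hycl hyi fun w hw h ↦ ?_
  exact hw.2 ⟨hexch y hyA w ⟨i, hyi, hw.1, h⟩, hw.1⟩

lemma IsIndepPacking.mul_matroidRank_le_ncard_inter_iUnion [Fintype ι] (hI : M.IsIndepPacking I)
    {A : Set α} (hAE : A ⊆ M.E) (hAfin : A.Finite) (hins : ∀ y ∈ A, ¬ M.CanInsert I y)
    (hexch : ∀ y ∈ A, ∀ x, M.CanExchange I y x → x ∈ A) :
    Fintype.card ι * matroidRank M A ≤ (A ∩ ⋃ i, I i).ncard := calc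
  Fintype.card ι * matroidRank M A = ∑ _i : ι, matroidRank M A := by simp
  _ ≤ ∑ i, (A ∩ I i).ncard := Finset.sum_le_sum fun i _ ↦ matroidRank_le fun K hK hKA ↦
    hK.ncard_le_ncard_of_subset_closure ((hI.1 i).subset inter_subset_right)
      (hAfin.subset inter_subset_left)
      (hKA.trans (subset_closure_inter_of_forall_not_canInsert hI.1 hAE hins hexch i))
  _ = (A ∩ ⋃ i, I i).ncard := (ncard_inter_iUnion hI.2 hAfin).symm

lemma exists_hasAugPath [Fintype ι] (hE : M.E.Finite) (hI : M.IsIndepPacking I) {e : α}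
    (heE : e ∈ M.E) (he : e ∉ ⋃ i, I i)
    (h : ∀ S ⊆ M.E, S.ncard ≤ Fintype.card ι * matroidRank M S) : ∃ n, M.HasAugPath I e n := by
  by_contra! hno
  set A := {y ∈ M.E | ∀ n, ¬ M.HasAugPath I y n}
  have hAE : A ⊆ M.E := sep_subset _ _
  have hA := hI.mul_matroidRank_le_ncard_inter_iUnion hAE (hE.subset hAE)
    (fun y hy hins ↦ hy.2 0 (.sink hins))
    fun y hy x hyx ↦ ⟨by obtain ⟨j, -, hxj, -⟩ := hyx; exact (hI.1 j).subset_ground hxj,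
      fun n hx ↦ hy.2 (n + 1) (.step hyx hx)⟩
  have hlt : (A ∩ ⋃ i, I i).ncard < A.ncard :=
    ncard_lt_ncard (inter_ssubset_left_iff.2 fun hA ↦ he (hA ⟨heE, hno⟩)) (hE.subset hAE)
  have := h A hAE
  omega

/-- Every augmenting path from `e` is longer than `n`, so `e` lies in the closure of `I i` and of
each `I i \ {w}` that a path of length `≤ n` exchanges into; hence trading `x` for `e` in `I i`
breaks no step of such a path. -/
lemma HasAugPath.update_of_shortest [DecidableEq ι] {e x : α} {i : ι} {n : ℕ}
    (hIi : M.Indep (I i)) (hei : e ∉ I i) (hxi : x ∈ I i) (hind : M.Indep (insert e (I i \ {x})))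
    (hmin : ∀ m, M.HasAugPath I e m → n < m) {y : α} {k : ℕ} (hy : M.HasAugPath I y k)
    (hk : k ≤ n) : M.HasAugPath (update I i (insert e (I i \ {x}))) y k := by
  have hye : y ≠ e := by rintro rfl; exact (hmin k hy).not_ge hk
  induction hy with
  | @sink y hins =>
    obtain ⟨j, hyj, hj⟩ := hins
    refine .sink ⟨j, ?_⟩
    rcases eq_or_ne j i with rfl | hji
    · rw [update_self]
      have hecl : e ∈ M.closure (I j) := hIi.mem_closure_iff'.2
        ⟨hind.subset_ground (mem_insert e _),
          fun h ↦ absurd (hmin 0 (.sink ⟨j, hei, h⟩)) n.not_lt_zero⟩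
      have hyX : y ∉ insert e (I j \ {x}) := by simp [hye, hyj]
      refine ⟨hyX, hj.insert_indep_of_subset_closure hyj hind ?_ hyX⟩
      exact insert_subset hecl (sdiff_subset.trans (M.subset_closure _ hIi.subset_ground))
    · rw [update_of_ne hji]
      exact ⟨hyj, hj⟩
  | @step y w k hyw hw ih =>
    obtain ⟨j, hyj, hwj, hj⟩ := hyw
    refine .step ⟨j, ?_⟩ (ih (by omega) fun hwe ↦ (hmin k (hwe ▸ hw)).not_ge (by omega))
    rcases eq_or_ne j i with rfl | hji
    · rw [update_self]
      have hwx : w ≠ x := by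
        rintro rfl
        exact (hmin _ (.step ⟨j, hei, hwj, hind⟩ hw)).not_ge hk
      have hecl : e ∈ M.closure (I j \ {w}) := (hIi.subset sdiff_subset).mem_closure_iff'.2
        ⟨hind.subset_ground (mem_insert e _),
          fun h ↦ absurd (hmin _ (.step ⟨j, hei, hwj, h⟩ hw)) hk.not_gt⟩
      have hyX : y ∉ insert e (I j \ {x}) := by simp [hye, hyj]
      refine ⟨hyX, mem_insert_of_mem e ⟨hwj, hwx⟩, ?_⟩
      refine hj.insert_indep_of_subset_closure (fun h ↦ hyj h.1) (hind.subset sdiff_subset) ?_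
        fun h ↦ hyX h.1
      rintro z ⟨rfl | hz, hzw⟩
      · exact hecl
      · exact M.subset_closure _ (sdiff_subset.trans hIi.subset_ground) ⟨hz.1, hzw⟩
    · rw [update_of_ne hji]
      exact ⟨hyj, hwj, hj⟩

lemma HasAugPath.exists_augment {e : α} {n : ℕ} (hI : M.IsIndepPacking I) (he : e ∉ ⋃ i, I i)
    (hpath : M.HasAugPath I e n) :
    ∃ J : ι → Set α, M.IsIndepPacking J ∧ insert e (⋃ i, I i) ⊆ ⋃ i, J i := by
  classical
  induction n using Nat.strong_induction_on generalizing I e with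
  | _ n ih =>
  obtain ⟨n₀, hpath₀, hmin⟩ : ∃ n₀, M.HasAugPath I e n₀ ∧ ∀ m, M.HasAugPath I e m → n₀ ≤ m :=
    ⟨Nat.find ⟨n, hpath⟩, Nat.find_spec ⟨n, hpath⟩, fun m hm ↦ Nat.find_min' _ hm⟩
  have hei : ∀ i, e ∉ I i := fun i h ↦ he (mem_iUnion_of_mem i h)
  cases hpath₀ with
  | sink hins =>
    obtain ⟨i, -, hind⟩ := hins
    have hX := subset_iUnion_update I i (insert e (I i))
    refine ⟨_, hI.update i hind fun j hj ↦ disjoint_insert_left.2 ⟨hei j, hI.2 hj.symm⟩, ?_⟩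
    exact insert_subset (hX (mem_insert e _)) ((iUnion_subset_union_iUnion_update I i _).trans
      (union_subset ((subset_insert e _).trans hX) subset_rfl))
  | @step _ x m hex hxpath =>
    obtain ⟨i, -, hxi, hind⟩ := hex
    set J := update I i (insert e (I i \ {x}))
    have hJ : M.IsIndepPacking J := hI.update i hind fun j hj ↦
      disjoint_insert_left.2 ⟨hei j, (hI.2 hj.symm).mono_left sdiff_subset⟩
    have hxJ : x ∉ ⋃ j, J j := by
      simp only [mem_iUnion, not_exists]
      intro j
      rcases eq_or_ne j i with rfl | hji
      · simp only [J, update_self]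
        rintro (h | ⟨-, h⟩)
        exacts [hei j (h ▸ hxi), h rfl]
      · simpa [J, hji] using (hI.2 hji).notMem_of_mem_right hxi
    obtain ⟨K, hK, hJK⟩ := ih m (by have := hmin n hpath; omega) hJ hxJ
      (hxpath.update_of_shortest (hI.1 i) (hei i) hxi hind hmin le_rfl)
    refine ⟨K, hK, subset_trans ?_ hJK⟩
    have hX := subset_iUnion_update I i (insert e (I i \ {x}))
    refine insert_subset (mem_insert_of_mem x (hX (mem_insert e _)))
      ((iUnion_subset_union_iUnion_update I i _).trans (union_subset ?_ (subset_insert x _)))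
    intro z hz
    rcases eq_or_ne z x with rfl | hzx
    · exact mem_insert z _
    · exact mem_insert_of_mem x (hX (mem_insert_of_mem e ⟨hz, hzx⟩))

lemma exists_isIndepPacking_iUnion_eq_ground [Finite ι] (hE : M.E.Finite)
    (hgrow : ∀ I : ι → Set α, M.IsIndepPacking I → ∀ e ∈ M.E, e ∉ ⋃ i, I i →
      ∃ J : ι → Set α, M.IsIndepPacking J ∧ insert e (⋃ i, I i) ⊆ ⋃ i, J i) :
    ∃ I : ι → Set α, M.IsIndepPacking I ∧ ⋃ i, I i = M.E := by
  have hfin : {I : ι → Set α | M.IsIndepPacking I}.Finite :=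
    (Finite.pi' fun _ ↦ hE.powerset).subset fun I hI i ↦ (hI.1 i).subset_ground
  have hempty : M.IsIndepPacking fun _ : ι ↦ (∅ : Set α) :=
    ⟨fun _ ↦ M.empty_indep, fun _ _ _ ↦ disjoint_empty _⟩
  obtain ⟨I, hI, hmax⟩ :=
    exists_max_image _ (fun I : ι → Set α ↦ (⋃ i, I i).ncard) hfin ⟨_, hempty⟩
  have hIE : ⋃ i, I i ⊆ M.E := iUnion_subset fun i ↦ (hI.1 i).subset_ground
  refine ⟨I, hI, hIE.antisymm fun e heE ↦ ?_⟩
  by_contra he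
  obtain ⟨J, hJ, hIJ⟩ := hgrow I hI e heE he
  have hJE : ⋃ i, J i ⊆ M.E := iUnion_subset fun i ↦ (hJ.1 i).subset_ground
  have hlt : (⋃ i, I i).ncard < (⋃ i, J i).ncard :=
    ncard_lt_ncard ((ssubset_insert he).trans_subset hIJ) (hE.subset hJE)
  exact (hmax J hJ).not_gt hlt

end Matroid

open Matroid in
theorem stmt10_general {α : Type*} (M : Matroid α) (hfin : M.E.Finite) (t : ℕ) :
    (∃ P : Fin t → Set α,
        (∀ i j : Fin t, i ≠ j → Disjoint (P i) (P j)) ∧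
        (∀ i, M.Indep (P i)) ∧
        (⋃ i, P i) = M.E)
      ↔ ∀ S : Set α, S ⊆ M.E → S.ncard ≤ t * matroidRank M S := by
  constructor
  · rintro ⟨P, hdis, hind, hP⟩ S hS
    have hPacking : M.IsIndepPacking P := ⟨hind, hdis⟩
    have := hPacking.ncard_inter_iUnion_le_mul_matroidRank (hfin.subset hS)
    rwa [hP, inter_eq_left.2 hS, Fintype.card_fin] at this
  · intro h
    obtain ⟨P, ⟨hind, hdis⟩, hP⟩ :=
      exists_isIndepPacking_iUnion_eq_ground (ι := Fin t) hfin fun I hI e heE he ↦ by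
        obtain ⟨n, hpath⟩ := exists_hasAugPath hfin hI heE he (by simpa using h)
        exact hpath.exists_augment hI he
    exact ⟨P, hdis, hind, hP⟩

/-- Edmonds' matroid partition theorem: the ground set of a (finite) matroid can be
partitioned into `t` independent sets iff `|S| ≤ t · rank(S)` for every subset `S` of the
ground set. -/
theorem stmt10 {α : Type*} (M : Matroid α) (hfin : M.E.Finite) (t : ℕ) (ht : 1 ≤ t) :
    (∃ P : Fin t → Set α,
        (∀ i j : Fin t, i ≠ j → Disjoint (P i) (P j)) ∧
        (∀ i, M.Indep (P i)) ∧
        (⋃ i, P i) = M.E)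
      ↔ ∀ S : Set α, S ⊆ M.E → S.ncard ≤ t * matroidRank M S :=
  stmt10_general M hfin t
end

section
/- Let k ≥ 2 and let A₁, …, A_t be invertible k × k matrices over 𝔽₂ (the blocks of a generator matrix G = (A₁ | A₂ | ⋯ | A_t) of a t-CIS [tk, k] code). Then for any row index i ∈ {1,…,k}, there exist column indices c₁, …, c_t such that for each j ∈ {1,…,t}, the (k−1) × (k−1) matrix A_j' obtained from A_j by deleting row i and column c_j is invertible. Consequently, (A₁' | ⋯ | A_t') generates a t-CIS [(k−1)t, k−1] code. -/
lemma exists_minor_unit {k : ℕ} (A : Matrix (Fin (k + 1)) (Fin (k + 1)) (ZMod 2))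
    (hA : IsUnit A) (i : Fin (k + 1)) :
    ∃ c : Fin (k + 1), IsUnit (A.submatrix i.succAbove c.succAbove) := by
  by_contra h
  push_neg at h
  have hz : ∀ c : Fin (k + 1), (A.submatrix i.succAbove c.succAbove).det = 0 := by
    intro c
    by_contra hd
    exact h c ((Matrix.isUnit_iff_isUnit_det _).2 (isUnit_iff_ne_zero.2 hd))
  have hdet : A.det = 0 := by
    rw [Matrix.det_succ_row A i]
    simp [hz]
  have := (Matrix.isUnit_iff_isUnit_det _).1 hA
  rw [hdet] at this
  exact (isUnit_iff_ne_zero.1 this) rfl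

/-- Subtracting construction: if `A₁, …, A_t` are invertible `(k+1) × (k+1)` matrices over
`𝔽₂` (the blocks of a generator matrix of a `t`-CIS `[t(k+1), k+1]` code), then for any row
index `i` there are column indices `c₁, …, c_t` such that deleting row `i` and column `c_j`
from `A_j` leaves an invertible `k × k` matrix for every `j`; hence the resulting blocks
generate a `t`-CIS `[tk, k]` code. -/
theorem stmt13 (k t : ℕ) (hk : 1 ≤ k)
    (A : Fin t → Matrix (Fin (k + 1)) (Fin (k + 1)) (ZMod 2))
    (hA : ∀ j, IsUnit (A j)) (i : Fin (k + 1)) :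
    ∃ c : Fin t → Fin (k + 1),
      ∀ j, IsUnit ((A j).submatrix i.succAbove (c j).succAbove) := by
  choose c hc using fun j => exists_minor_unit (A j) (hA j) i
  exact ⟨c, hc⟩
end

section
/- Let k ≥ 1, let A be an invertible k × k matrix over 𝔽₂ with rows A(r₁), …, A(r_k), let y = (y₁,…,y_k) ∈ 𝔽₂^k, and let x ∈ 𝔽₂^k. Write x = ∑_{i=1}^{k} c_i A(r_i) with the (unique) coefficients c_i ∈ 𝔽₂, and set z = 1 + ∑_{i=1}^{k} c_i y_i ∈ 𝔽₂. Then the (k+1) × (k+1) matrix over 𝔽₂ whose first row is (z, x) and whose (i+1)-st row is (y_i, A(r_i)) for 1 ≤ i ≤ k is invertible. Consequently (building-up construction): if A₁, …, A_t are invertible k × k matrices over 𝔽₂, and for each j one picks x_j, y_{·j} ∈ 𝔽₂^k and defines c_{·j}, z_j as above from A_j, then the (k+1) × t(k+1) matrix G₁ whose j-th block is the above (k+1) × (k+1) extension of A_j has all t blocks invertible, hence generates a t-CIS [t(k+1), k+1] code. -/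
open Finset


lemma key {k : ℕ} (A : Matrix (Fin k) (Fin k) (ZMod 2)) (x y : Fin k → ZMod 2)
    (c : Fin k → ZMod 2) (hA : IsUnit A) (hc : x = Matrix.vecMul c A)
    (z : ZMod 2) (hz : z = 1 + ∑ i, c i * y i) :
    IsUnit (Matrix.of (fun i j =>
      Fin.cases (Fin.cases z x j) (fun i' => Fin.cases (y i') (fun j' => A i' j') j) i :
      Matrix (Fin (k+1)) (Fin (k+1)) (ZMod 2))) := by
  set M : Matrix (Fin (k+1)) (Fin (k+1)) (ZMod 2) := Matrix.of (fun i j =>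
      Fin.cases (Fin.cases z x j) (fun i' => Fin.cases (y i') (fun j' => A i' j') j) i) with hM
  rw [Matrix.isUnit_iff_isUnit_det]
  set c' : Fin (k+1) → ZMod 2 := Fin.cases 0 c with hc'
  have hdet : (M.updateRow 0 ((1:ZMod 2) • M 0 + ∑ i ∈ Finset.univ.erase 0, c' i • M i)).det
      = (1:ZMod 2) • M.det :=
    Matrix.det_updateRow_sum_aux M (Finset.univ.erase 0) (Finset.univ.notMem_erase 0) c' 1
  have hsum : ∑ i ∈ Finset.univ.erase 0, c' i • M i = ∑ i : Fin k, c i • M i.succ := by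
    rw [Finset.sum_erase _ (by simp [hc'])]
    rw [Fin.sum_univ_succ]
    simp [hc']
  have hrow : (1:ZMod 2) • M 0 + ∑ i ∈ Finset.univ.erase 0, c' i • M i =
      (fun j => Fin.cases 1 (fun _ => 0) j : Fin (k+1) → ZMod 2) := by
    rw [hsum]
    funext j
    induction j using Fin.cases with
    | zero =>
      simp only [one_smul, Pi.add_apply, Finset.sum_apply, Pi.smul_apply, smul_eq_mul, hM]
      simp only [Matrix.of_apply, Fin.cases_zero, Fin.cases_succ]
      rw [hz]
      ring_nf
      simp only [show ((2:ZMod 2)) = 0 from rfl, mul_zero, add_zero]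
    | succ j =>
      simp only [one_smul, Pi.add_apply, Finset.sum_apply, Pi.smul_apply, smul_eq_mul, hM]
      simp only [Matrix.of_apply, Fin.cases_succ, Fin.cases_zero]
      rw [hc]
      have : Matrix.vecMul c A j = ∑ i, c i * A i j := by
        simp [Matrix.vecMul, dotProduct]
      rw [this]
      rw [CharTwo.add_self_eq_zero]
  rw [hrow] at hdet
  set N := M.updateRow 0 (fun j => Fin.cases 1 (fun _ => 0) j : Fin (k+1) → ZMod 2) with hN
  have hNdet : N.det = A.det := by
    rw [Matrix.det_succ_row_zero]
    rw [Fin.sum_univ_succ]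
    have h0 : N 0 0 = 1 := by simp [hN]
    have hs : ∀ j : Fin k, N 0 j.succ = 0 := by intro j; simp [hN]
    simp only [h0, hs, mul_zero, zero_mul, mul_one, Finset.sum_const_zero, add_zero]
    have : N.submatrix Fin.succ (Fin.succAbove 0) = A := by
      funext i j
      simp [hN, Matrix.submatrix, Fin.succAbove_zero, hM, Matrix.updateRow_ne (Fin.succ_ne_zero i)]
    rw [this]
    simp
  rw [hNdet, one_smul] at hdet
  rw [← hdet]
  exact (Matrix.isUnit_iff_isUnit_det A).mp hA

/-- The `(k+1) × (k+1)` matrix whose first row is `(z, x)` and whose `(i+1)`-st row is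
`(y i, i-th row of A)`. -/
def buildUp {k : ℕ} (A : Matrix (Fin k) (Fin k) (ZMod 2)) (x y : Fin k → ZMod 2)
    (z : ZMod 2) : Matrix (Fin (k + 1)) (Fin (k + 1)) (ZMod 2) :=
  Matrix.of fun i j =>
    Fin.cases (Fin.cases z x j) (fun i' => Fin.cases (y i') (fun j' => A i' j') j) i

/-- Building-up construction: for each `j`, if `A_j` is invertible, `x_j = ∑ᵢ c_{ij} A_j(rᵢ)`
(uniquely, i.e. `x_j` is the row vector `c_j ⬝ A_j`) and
`z_j = 1 + ∑ᵢ c_{ij} y_{ij}`, then the extended `(k+1) × (k+1)` block with first row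
`(z_j, x_j)` and remaining rows `(y_{ij}, A_j(rᵢ))` is invertible; hence the `t` blocks of
the matrix `G₁` are all invertible, so `G₁` generates a `t`-CIS `[t(k+1), k+1]` code. -/
theorem stmt14 (k t : ℕ) (hk : 1 ≤ k)
    (A : Fin t → Matrix (Fin k) (Fin k) (ZMod 2)) (hA : ∀ j, IsUnit (A j))
    (x y : Fin t → (Fin k → ZMod 2)) (c : Fin t → (Fin k → ZMod 2))
    (hc : ∀ j, x j = Matrix.vecMul (c j) (A j))
    (z : Fin t → ZMod 2) (hz : ∀ j, z j = 1 + ∑ i, c j i * y j i) :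
    ∀ j, IsUnit (buildUp (A j) (x j) (y j) (z j)) := by
  intro j
  exact key (A j) (x j) (y j) (c j) (hA j) (hc j) (z j) (hz j)
end
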